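/- arXiv:1303.4116 — 2 statements merged into one kernel-verified Lean document; each statement's English description precedes it below -/
import Mathlib

section
/- For the matrices A = [[0,2,0],[1,-1,0],[1,-1,0]], B = [[-1,0,0],[0,0,0],[0,0,-1]], C = [[0,0,0],[0,-1,0],[0,0,1]], and λ ∈ ℂ with λ ∉ {0, 1, -8} and η = √(λ² + 8λ) ≠ 0, set D_λ = -λB - C = diag(λ, 1, λ-1). Then with P = [[(λ-η)/(4λ),1,0],[(λ+η)/(4λ),1,0],[0,1/(1-λ),1/(λ-1)]] and Q = [[4λ/((λ+η)η), -4λ/((λ-η)η), 0],[-λ/η, λ/η, 0],[-λ/(η(λ-1)), λ/(η(λ-1)), 1]], one has P A Q = diag(1,1,0) and P D_λ Q = diag(2λ/(-λ-η), 2λ/(-λ+η), 1). In particular the pencil {D_λ + μA} is regular of index 1. -/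
open Matrix

/-!
Everything is a finite computation with rational functions of `λ` and `η`; the only relation
needed is `(λ + η)(λ - η) = -8λ`, the defining equation of `η`, which also shows that `λ ± η`
are nonzero. Regularity of the pencil is witnessed already at `μ = 0`, since
`D_λ = diag(λ, 1, λ - 1)` is invertible.
-/

namespace Example2

variable {K : Type*} [Field K]

def A : Matrix (Fin 3) (Fin 3) K := !![0, 2, 0; 1, -1, 0; 1, -1, 0]

def B : Matrix (Fin 3) (Fin 3) K := !![-1, 0, 0; 0, 0, 0; 0, 0, -1]

def C : Matrix (Fin 3) (Fin 3) K := !![0, 0, 0; 0, -1, 0; 0, 0, 1]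

def D (lam : K) : Matrix (Fin 3) (Fin 3) K := -lam • B - C

def P (lam η : K) : Matrix (Fin 3) (Fin 3) K :=
  !![(lam - η) / (4 * lam), 1, 0;
     (lam + η) / (4 * lam), 1, 0;
     0, 1 / (1 - lam), 1 / (lam - 1)]

def Q (lam η : K) : Matrix (Fin 3) (Fin 3) K :=
  !![4 * lam / ((lam + η) * η), -(4 * lam) / ((lam - η) * η), 0;
     -lam / η, lam / η, 0;
     -lam / (η * (lam - 1)), lam / (η * (lam - 1)), 1]

theorem D_eq_diagonal (lam : K) : D lam = diagonal ![lam, 1, lam - 1] := by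
  rw [diagonal_vec3, D, B, C]
  ext i j
  fin_cases i <;> fin_cases j <;> simp

theorem det_D (lam : K) : (D lam).det = lam * (lam - 1) := by
  rw [D_eq_diagonal, det_diagonal, Fin.prod_univ_three]
  simp

variable [CharZero K] {lam η : K}

theorem add_mul_sub_ne_zero (h0 : lam ≠ 0) (hη : η ^ 2 = lam ^ 2 + 8 * lam) :
    (lam + η) * (lam - η) ≠ 0 := by
  have hprod : (lam + η) * (lam - η) = -8 * lam := by linear_combination -hη
  rw [hprod]
  exact mul_ne_zero (by norm_num) h0

theorem det_P (h0 : lam ≠ 0) (h1 : lam ≠ 1) :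
    (P lam η).det = -η / (2 * lam * (lam - 1)) := by
  rw [P, det_fin_three]
  simp only [one_div, Fin.isValue, of_apply, cons_val', cons_val_zero, cons_val_fin_one,
    cons_val_one, mul_one, cons_val, mul_zero, zero_mul, sub_zero, one_mul, add_zero]
  field_simp
  ring

theorem det_Q (h0 : lam ≠ 0) (hη : η ^ 2 = lam ^ 2 + 8 * lam) (hη0 : η ≠ 0) :
    (Q lam η).det = lam / η := by
  obtain ⟨hpe, hme⟩ := mul_ne_zero_iff.mp (add_mul_sub_ne_zero h0 hη)
  rw [Q, det_fin_three]
  simp only [Fin.isValue, of_apply, cons_val', cons_val_zero, cons_val_fin_one, cons_val_one,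
    cons_val, mul_one, mul_zero, zero_mul, sub_zero, add_zero]
  field_simp
  linear_combination η * hη

theorem P_mul_A (h0 : lam ≠ 0) (h1 : lam ≠ 1) :
    P lam η * A = !![1, -(lam + η) / (2 * lam), 0; 1, (η - lam) / (2 * lam), 0; 0, 0, 0] := by
  rw [P, A, mul_fin_three]
  simp only [mul_zero, mul_one, zero_add, add_zero, mul_neg, neg_zero, one_div, zero_mul,
    neg_add_rev, EmbeddingLike.apply_eq_iff_eq, vecCons_inj, and_true, true_and]
  refine ⟨?_, ?_, ?_, ?_⟩ <;> field_simp <;> ring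

theorem P_mul_A_mul_Q (h0 : lam ≠ 0) (h1 : lam ≠ 1) (hη : η ^ 2 = lam ^ 2 + 8 * lam)
    (hη0 : η ≠ 0) : P lam η * A * Q lam η = diagonal ![1, 1, 0] := by
  obtain ⟨hpe, hme⟩ := mul_ne_zero_iff.mp (add_mul_sub_ne_zero h0 hη)
  rw [P_mul_A h0 h1, Q, mul_fin_three, diagonal_vec3]
  simp only [Nat.succ_eq_add_one, Nat.reduceAdd, one_mul, neg_add_rev, zero_mul, add_zero,
    mul_zero, mul_one, EmbeddingLike.apply_eq_iff_eq, vecCons_inj, and_true]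
  refine ⟨⟨?_, ?_⟩, ?_, ?_⟩ <;> field_simp
  · linear_combination -hη
  · linear_combination hη
  · linear_combination -hη
  · linear_combination hη

theorem P_mul_D (h0 : lam ≠ 0) (h1 : lam ≠ 1) :
    P lam η * D lam = !![(lam - η) / 4, 1, 0; (lam + η) / 4, 1, 0; 0, 1 / (1 - lam), 1] := by
  rw [P, D_eq_diagonal, diagonal_vec3, mul_fin_three]
  simp only [mul_zero, add_zero, mul_one, zero_add, zero_mul, one_div,
    EmbeddingLike.apply_eq_iff_eq, vecCons_inj, and_true, true_and]
  refine ⟨?_, ?_, ?_⟩ <;> field_simp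

theorem P_mul_D_mul_Q (h0 : lam ≠ 0) (h1 : lam ≠ 1) (hη : η ^ 2 = lam ^ 2 + 8 * lam)
    (hη0 : η ≠ 0) :
    P lam η * D lam * Q lam η = diagonal ![2 * lam / (-lam - η), 2 * lam / (-lam + η), 1] := by
  obtain ⟨hpe, hme⟩ := mul_ne_zero_iff.mp (add_mul_sub_ne_zero h0 hη)
  have hpe' : -lam - η ≠ 0 := fun h => hpe (by linear_combination -h)
  have hme' : -lam + η ≠ 0 := fun h => hme (by linear_combination -h)
  rw [P_mul_D h0 h1, Q, mul_fin_three, diagonal_vec3]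
  simp only [one_mul, zero_mul, add_zero, mul_zero, mul_one, one_div, zero_add,
    EmbeddingLike.apply_eq_iff_eq, vecCons_inj, and_true]
  refine ⟨⟨?_, ?_⟩, ⟨?_, ?_⟩, ?_, ?_⟩ <;> field_simp <;> ring

end Example2

theorem example2_WK_decomposition_index1_general
    (lam η : ℂ) (h0 : lam ≠ 0) (h1 : lam ≠ 1)
    (hη : η ^ 2 = lam ^ 2 + 8 * lam) (hη0 : η ≠ 0)
    (A B C D P Q : Matrix (Fin 3) (Fin 3) ℂ)
    (hA : A = !![0, 2, 0; 1, -1, 0; 1, -1, 0])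
    (hB : B = !![-1, 0, 0; 0, 0, 0; 0, 0, -1])
    (hC : C = !![0, 0, 0; 0, -1, 0; 0, 0, 1])
    (hD : D = -lam • B - C)
    (hP : P = !![(lam - η) / (4 * lam), 1, 0;
                 (lam + η) / (4 * lam), 1, 0;
                 0, 1 / (1 - lam), 1 / (lam - 1)])
    (hQ : Q = !![4 * lam / ((lam + η) * η), -(4 * lam) / ((lam - η) * η), 0;
                 -lam / η, lam / η, 0;
                 -lam / (η * (lam - 1)), lam / (η * (lam - 1)), 1]) :
    D = Matrix.diagonal ![lam, 1, lam - 1] ∧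
    IsUnit P.det ∧ IsUnit Q.det ∧
    P * A * Q = Matrix.diagonal ![1, 1, 0] ∧
    P * D * Q = Matrix.diagonal ![2 * lam / (-lam - η), 2 * lam / (-lam + η), 1] ∧
    (∃ μ : ℂ, (D + μ • A).det ≠ 0) := by
  obtain rfl : A = Example2.A := hA
  subst hB hC
  obtain rfl : D = Example2.D lam := hD
  obtain rfl : P = Example2.P lam η := hP
  obtain rfl : Q = Example2.Q lam η := hQ
  have h1' : lam - 1 ≠ 0 := sub_ne_zero.mpr h1
  refine ⟨Example2.D_eq_diagonal lam, ?_, ?_, Example2.P_mul_A_mul_Q h0 h1 hη hη0,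
    Example2.P_mul_D_mul_Q h0 h1 hη hη0, 0, ?_⟩
  · rw [Example2.det_P h0 h1]
    exact isUnit_iff_ne_zero.mpr (by simp [h0, h1', hη0])
  · rw [Example2.det_Q h0 hη hη0]
    exact isUnit_iff_ne_zero.mpr (div_ne_zero h0 hη0)
  · rw [zero_smul, add_zero, Example2.det_D]
    exact mul_ne_zero h0 h1'

/-- Weierstrass–Kronecker decomposition of the index-1 pencil from
Example 2: P A Q = diag(1,1,0), P D_λ Q = diag(2λ/(-λ-η), 2λ/(-λ+η), 1), where
η² = λ² + 8λ, λ ∉ {0,1,-8}, η ≠ 0; hence {D_λ + μA} is regular of index 1. -/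
theorem example2_WK_decomposition_index1
    (lam η : ℂ) (h0 : lam ≠ 0) (h1 : lam ≠ 1) (h8 : lam ≠ -8)
    (hη : η ^ 2 = lam ^ 2 + 8 * lam) (hη0 : η ≠ 0)
    (A B C D P Q : Matrix (Fin 3) (Fin 3) ℂ)
    (hA : A = !![0, 2, 0; 1, -1, 0; 1, -1, 0])
    (hB : B = !![-1, 0, 0; 0, 0, 0; 0, 0, -1])
    (hC : C = !![0, 0, 0; 0, -1, 0; 0, 0, 1])
    (hD : D = -lam • B - C)
    (hP : P = !![(lam - η) / (4 * lam), 1, 0;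
                 (lam + η) / (4 * lam), 1, 0;
                 0, 1 / (1 - lam), 1 / (lam - 1)])
    (hQ : Q = !![4 * lam / ((lam + η) * η), -(4 * lam) / ((lam - η) * η), 0;
                 -lam / η, lam / η, 0;
                 -lam / (η * (lam - 1)), lam / (η * (lam - 1)), 1]) :
    D = Matrix.diagonal ![lam, 1, lam - 1] ∧
    IsUnit P.det ∧ IsUnit Q.det ∧
    P * A * Q = Matrix.diagonal ![1, 1, 0] ∧
    P * D * Q = Matrix.diagonal ![2 * lam / (-lam - η), 2 * lam / (-lam + η), 1] ∧
    (∃ μ : ℂ, (D + μ • A).det ≠ 0) :=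
  example2_WK_decomposition_index1_general lam η h0 h1 hη hη0 A B C D P Q hA hB hC hD hP hQ
end

section
/- Consider the coil pencil: for λ ∈ ℂ with λ ∉ {0,1}, A = [[0,0,0,0],[0,0,-a,b],[1,0,0,0],[0,1,0,0]] specialized to a = b = 1 (i.e., LC/l² = L/D = 1), B' = diag(1,1,0,0) matrices as in equation (2) with D_λ = diag-type matrix [[λ,-1,0,0],[0,λ,0,0],[0,0,1,0],[0,0,0,1]]. With P and Q as given (depending on λ and √(1-λ)), one has P A Q = diag(J, N₂')-form [[1,0,0,0],[0,1,0,0],[0,0,0,1],[0,0,0,0]] and P D_λ Q = diag(-iλ/√(1-λ), iλ/√(1-λ), 1, 1). Hence the pencil {D_λ + μA} is regular of index 2 for all such λ. -/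
/-!
Substituting `lam = 1 - μ ^ 2` turns every entry of `P A Q` and `P D_λ Q` into a rational
function of `μ` alone, so both products are checked entrywise by clearing denominators and
using `I ^ 2 = -1`. Since `P D_λ Q` is diagonal with nonzero entries, `det P`, `det D_λ` and
`det Q` are all nonzero; in particular the pencil is regular, and its nilpotent part is the
`2 × 2` shift, so the index is `2`.
-/

open Matrix Complex

theorem Matrix.isUnit_det_of_isUnit_det_mul_mul {n R : Type*} [Fintype n] [DecidableEq n]
    [CommRing R] {P M Q : Matrix n n R} (h : IsUnit (P * M * Q).det) :
    IsUnit P.det ∧ IsUnit M.det ∧ IsUnit Q.det := by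
  simpa only [det_mul, IsUnit.mul_iff, and_assoc] using h

noncomputable section

def coilA : Matrix (Fin 4) (Fin 4) ℂ := !![0, 0, 0, 0; 0, 0, -1, 1; 1, 0, 0, 0; 0, 1, 0, 0]

def coilD (lam : ℂ) : Matrix (Fin 4) (Fin 4) ℂ :=
  !![lam, -1, 0, 0; 0, lam, 0, 0; 0, 0, 1, 0; 0, 0, 0, 1]

def coilP (lam μ : ℂ) : Matrix (Fin 4) (Fin 4) ℂ :=
  !![-I / μ, -I * μ / lam, 1, -1;
     I / μ, I * μ / lam, 1, -1;
     0, 0, 1, -1 / lam;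
     1 / lam, 0, 0, 0]

def coilQ (lam μ : ℂ) : Matrix (Fin 4) (Fin 4) ℂ :=
  !![1 / (2 * (1 - lam)), 1 / (2 * (1 - lam)), 0, -lam / (1 - lam);
     lam / (2 * (1 - lam)), lam / (2 * (1 - lam)), 0, -lam / (1 - lam);
     -I * lam / (2 * μ ^ 3), I * lam / (2 * μ ^ 3), -lam / (1 - lam), 0;
     -I * lam ^ 2 / (2 * μ ^ 3), I * lam ^ 2 / (2 * μ ^ 3), -lam / (1 - lam), 0]

end

section Coil

variable {lam μ : ℂ}

theorem coilP_mul_coilA_mul_coilQ (h0 : lam ≠ 0) (hμ : μ ^ 2 = 1 - lam) (hμ0 : μ ≠ 0) :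
    coilP lam μ * coilA * coilQ lam μ = !![1, 0, 0, 0; 0, 1, 0, 0; 0, 0, 0, 1; 0, 0, 0, 0] := by
  obtain rfl : lam = 1 - μ ^ 2 := by linear_combination hμ
  ext i j
  fin_cases i <;> fin_cases j <;>
    simp [coilP, coilA, coilQ, mul_apply, Fin.sum_univ_four] <;>
    field_simp <;> ring_nf <;> simp only [I_sq] <;> ring_nf

theorem coilP_mul_coilD_mul_coilQ (h0 : lam ≠ 0) (hμ : μ ^ 2 = 1 - lam) (hμ0 : μ ≠ 0) :
    coilP lam μ * coilD lam * coilQ lam μ = diagonal ![-I * lam / μ, I * lam / μ, 1, 1] := by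
  obtain rfl : lam = 1 - μ ^ 2 := by linear_combination hμ
  ext i j
  fin_cases i <;> fin_cases j <;>
    simp [coilP, coilD, coilQ, mul_apply, Fin.sum_univ_four] <;>
    field_simp <;> ring_nf

theorem isUnit_det_coilDiagonal (h0 : lam ≠ 0) (hμ0 : μ ≠ 0) :
    IsUnit (diagonal ![-I * lam / μ, I * lam / μ, 1, 1]).det := by
  rw [← isUnit_iff_isUnit_det, isUnit_diagonal, Pi.isUnit_iff]
  intro i
  fin_cases i <;> simp [h0, hμ0, I_ne_zero]

end Coil

theorem coil_WK_decomposition_index2_general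
    (lam μ : ℂ) (h0 : lam ≠ 0)
    (hμ : μ ^ 2 = 1 - lam) (hμ0 : μ ≠ 0)
    (A D P Q : Matrix (Fin 4) (Fin 4) ℂ)
    (hA : A = !![0, 0, 0, 0; 0, 0, -1, 1; 1, 0, 0, 0; 0, 1, 0, 0])
    (hD : D = !![lam, -1, 0, 0; 0, lam, 0, 0; 0, 0, 1, 0; 0, 0, 0, 1])
    (hP : P = !![-I / μ, -I * μ / lam, 1, -1;
                 I / μ, I * μ / lam, 1, -1;
                 0, 0, 1, -1 / lam;
                 1 / lam, 0, 0, 0])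
    (hQ : Q = !![1 / (2 * (1 - lam)), 1 / (2 * (1 - lam)), 0, -lam / (1 - lam);
                 lam / (2 * (1 - lam)), lam / (2 * (1 - lam)), 0, -lam / (1 - lam);
                 -I * lam / (2 * μ ^ 3), I * lam / (2 * μ ^ 3), -lam / (1 - lam), 0;
                 -I * lam ^ 2 / (2 * μ ^ 3), I * lam ^ 2 / (2 * μ ^ 3),
                   -lam / (1 - lam), 0]) :
    IsUnit P.det ∧ IsUnit Q.det ∧
    P * A * Q = !![1, 0, 0, 0; 0, 1, 0, 0; 0, 0, 0, 1; 0, 0, 0, 0] ∧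
    P * D * Q = Matrix.diagonal ![-I * lam / μ, I * lam / μ, 1, 1] ∧
    (∃ ν : ℂ, (D + ν • A).det ≠ 0) ∧
    !![(0 : ℂ), 1; 0, 0] ^ 2 = 0 := by
  have hPAQ := coilP_mul_coilA_mul_coilQ h0 hμ hμ0
  have hPDQ := coilP_mul_coilD_mul_coilQ h0 hμ hμ0
  obtain ⟨hPdet, hDdet, hQdet⟩ := isUnit_det_of_isUnit_det_mul_mul
    (hPDQ ▸ isUnit_det_coilDiagonal h0 hμ0)
  subst hA hD hP hQ
  refine ⟨hPdet, hQdet, hPAQ, hPDQ, ⟨0, by rw [zero_smul, add_zero]; exact hDdet.ne_zero⟩, ?_⟩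
  ext i j
  fin_cases i <;> fin_cases j <;> simp [sq]

/-- Weierstrass–Kronecker decomposition of the superconducting-coil
pencil (normalized parameters): with μ a fixed square root of 1-λ, λ ∉ {0,1},
P A Q = diag(I₂, N₂) and P D_λ Q = diag(-iλ/μ, iλ/μ, 1, 1); hence the pencil
{D_λ + νA} is regular of index 2. -/
theorem coil_WK_decomposition_index2
    (lam μ : ℂ) (h0 : lam ≠ 0) (h1 : lam ≠ 1)
    (hμ : μ ^ 2 = 1 - lam) (hμ0 : μ ≠ 0)
    (A D P Q : Matrix (Fin 4) (Fin 4) ℂ)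
    (hA : A = !![0, 0, 0, 0; 0, 0, -1, 1; 1, 0, 0, 0; 0, 1, 0, 0])
    (hD : D = !![lam, -1, 0, 0; 0, lam, 0, 0; 0, 0, 1, 0; 0, 0, 0, 1])
    (hP : P = !![-I / μ, -I * μ / lam, 1, -1;
                 I / μ, I * μ / lam, 1, -1;
                 0, 0, 1, -1 / lam;
                 1 / lam, 0, 0, 0])
    (hQ : Q = !![1 / (2 * (1 - lam)), 1 / (2 * (1 - lam)), 0, -lam / (1 - lam);
                 lam / (2 * (1 - lam)), lam / (2 * (1 - lam)), 0, -lam / (1 - lam);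
                 -I * lam / (2 * μ ^ 3), I * lam / (2 * μ ^ 3), -lam / (1 - lam), 0;
                 -I * lam ^ 2 / (2 * μ ^ 3), I * lam ^ 2 / (2 * μ ^ 3),
                   -lam / (1 - lam), 0]) :
    IsUnit P.det ∧ IsUnit Q.det ∧
    P * A * Q = !![1, 0, 0, 0; 0, 1, 0, 0; 0, 0, 0, 1; 0, 0, 0, 0] ∧
    P * D * Q = Matrix.diagonal ![-I * lam / μ, I * lam / μ, 1, 1] ∧
    (∃ ν : ℂ, (D + ν • A).det ≠ 0) ∧
    !![(0 : ℂ), 1; 0, 0] ^ 2 = 0 :=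
  coil_WK_decomposition_index2_general lam μ h0 hμ hμ0 A D P Q hA hD hP hQ
end
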